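/- arXiv:1802.10561 — 5 statements merged into one kernel-verified Lean document; each statement's English description precedes it below -/
import Mathlib

section
/- Let k be a positive integer and β > 1 a real number satisfying β^{k+1} = β^k + 1. Then for every natural number r, k + 1 + r(r+3)/2 < β^{2(k+r)}. -/
/-!
With `t = β - 1` the defining equation says `β ^ k * t = 1`, so Bernoulli's inequality
`β ^ r ≥ 1 + r t` gives `β ^ (k + r) ≥ β ^ k + r`. Taking `r = k` yields `β ^ (2k) > k + 1`,
and squaring the general case gives
`β ^ (2(k + r)) ≥ β ^ (2k) + 2 r β ^ k + r ^ 2 > k + 1 + 2r + r ^ 2 ≥ k + 1 + r(r + 3)/2`.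
-/

theorem pow_mul_sub_one_eq_one {R : Type*} [CommRing R] {β : R} {k : ℕ}
    (h : β ^ (k + 1) = β ^ k + 1) : β ^ k * (β - 1) = 1 := by
  linear_combination h

theorem pow_add_natCast_le_pow_add {R : Type*} [CommRing R] [LinearOrder R]
    [IsStrictOrderedRing R] {β : R} {k : ℕ} (hβ : 1 ≤ β) (h : β ^ k * (β - 1) = 1)
    (r : ℕ) : β ^ k + r ≤ β ^ (k + r) :=
  calc β ^ k + r = β ^ k * (1 + r * (β - 1)) := by linear_combination (r : R) * h.symm
    _ ≤ β ^ k * β ^ r := by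
      gcongr
      simpa using one_add_mul_le_pow (a := β - 1) (by linarith) r
    _ = β ^ (k + r) := (pow_add β k r).symm

theorem Nat.mul_add_three_div_two_le (r : ℕ) : r * (r + 3) / 2 ≤ r ^ 2 + 2 * r :=
  Nat.div_le_of_le_mul (by nlinarith)

/-- Lemma 4.1 (ii): if `k ≥ 1` and `β > 1` satisfies `β^(k+1) = β^k + 1`, then
`k + 1 + r(r+3)/2 < β^(2(k+r))` for every natural number `r`. -/
theorem beta_pow_gt_quadratic (k : ℕ) (hk : 1 ≤ k) (β : ℝ) (hβ : 1 < β)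
    (hroot : β ^ (k + 1) = β ^ k + 1) :
    ∀ r : ℕ, ((k + 1 + r * (r + 3) / 2 : ℕ) : ℝ) < β ^ (2 * (k + r)) := by
  intro r
  have h := pow_mul_sub_one_eq_one hroot
  have hβk : 1 < β ^ k := one_lt_pow₀ hβ (by omega)
  have hbase : (k : ℝ) + 1 < (β ^ k) ^ 2 := by
    have := pow_add_natCast_le_pow_add hβ.le h k
    rw [← two_mul, pow_mul'] at this
    linarith
  calc ((k + 1 + r * (r + 3) / 2 : ℕ) : ℝ) ≤ k + 1 + (r ^ 2 + 2 * r) := by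
        exact_mod_cast Nat.add_le_add_left (Nat.mul_add_three_div_two_le r) (k + 1)
    _ < (β ^ k + r) ^ 2 := by nlinarith [(Nat.cast_nonneg r : (0 : ℝ) ≤ r)]
    _ ≤ (β ^ (k + r)) ^ 2 := by gcongr; exact pow_add_natCast_le_pow_add hβ.le h r
    _ = β ^ (2 * (k + r)) := by ring
end

section
/- For each positive integer k, let q_k(n) count binary words of length n with any two 1's separated by at least k zeros, and let β_k be the largest real root of x^{k+1} - x^k - 1. Then there exist positive constants c_k, d_k such that c_k · β_k^n < q_k(n) < d_k · β_k^n for all n ∈ ℕ. -/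
/-- A binary word in which any two occurrences of `true` (the letter 1) are separated
by at least `k` occurrences of `false` (the letter 0). -/
def Separated (k : ℕ) (v : List Bool) : Prop :=
  ∀ i j, i < j → j < v.length → v.getD i false = true → v.getD j false = true → i + k < j

/-- `Q k n` is the number of binary words of length `n` in which any two occurrences of
the letter 1 are separated by at least `k` occurrences of the letter 0. -/
noncomputable def Q (k n : ℕ) : ℕ :=
  Set.ncard {v : List Bool | v.length = n ∧ Separated k v}

/-!
A separated word of length `n + 1` is either `0w` with `w` separated of length `n`, or `1` followed
by `min k n` zeros and a separated word of length `n - k`. Hence `q_k(n+1) = q_k(n) + q_k(n - k)`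
(truncated subtraction), which gives both the initial values `q_k(n) = n + 1` for `n ≤ k + 1`
and the recurrence `q_k(n+k+1) = q_k(n+k) + q_k(n)`.

The powers `β ^ n` satisfy the same recurrence because `β ^ (k+1) = β ^ k + 1`, and a strict
inequality between two solutions on the initial window `0, …, k` propagates to all `n`.
Choosing `c, d` so that `c β^n < n + 1 < d β^n` on that window gives the bounds.
-/

theorem List.forall_getD_eq_false_iff {k : ℕ} {w : List Bool} :
    (∀ i < k, w.getD i false = false) ↔
      ∃ u, w = List.replicate (min k w.length) false ++ u := by
  constructor
  · intro h
    refine ⟨w.drop k, ?_⟩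
    conv_lhs => rw [← List.take_append_drop k w]
    congr 1
    refine List.eq_replicate_iff.2 ⟨by simp, fun b hb => ?_⟩
    obtain ⟨i, hi, rfl⟩ := List.getElem_of_mem hb
    simp only [List.length_take] at hi
    have := h i (lt_of_lt_of_le hi (min_le_left _ _))
    rwa [List.getD_eq_getElem _ _ (lt_of_lt_of_le hi (min_le_right _ _)),
      ← List.getElem_take] at this
  · rintro ⟨u, hu⟩ i hi
    rcases lt_or_ge i w.length with hiw | hiw
    · rw [List.getD_eq_getElem?_getD, hu, List.getElem?_append_left (by simp; omega)]
      simp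
    · exact List.getD_eq_default _ _ hiw

namespace Separated

variable {k : ℕ}

theorem nil : Separated k [] := fun _ _ _ hj => absurd hj (Nat.not_lt_zero _)

theorem cons_false_iff {w : List Bool} : Separated k (false :: w) ↔ Separated k w := by
  constructor
  · intro h i j hij hj hi hj'
    have := h (i + 1) (j + 1) (by omega) (by simpa using hj) hi hj'
    omega
  · rintro h (_ | i) (_ | j) hij hj hi hj'
    all_goals simp only [List.getD_cons_zero, List.getD_cons_succ] at hi hj'
    all_goals first | omega | skip
    · exact absurd hi Bool.false_ne_true
    · have := h i j (by omega) (by simpa using hj) hi hj'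
      omega

theorem cons_true_iff {w : List Bool} :
    Separated k (true :: w) ↔ (∀ i < k, w.getD i false = false) ∧ Separated k w := by
  constructor
  · intro h
    refine ⟨fun i hi => ?_, fun i j hij hj hi hj' => ?_⟩
    · rcases lt_or_ge i w.length with hiw | hiw
      · by_contra hne
        have := h 0 (i + 1) (by omega) (by simpa using hiw) rfl (by simpa using hne)
        omega
      · exact List.getD_eq_default _ _ hiw
    · have := h (i + 1) (j + 1) (by omega) (by simpa using hj) hi hj'
      omega
  · rintro ⟨hz, h⟩ (_ | i) (_ | j) hij hj hi hj'
    all_goals simp only [List.getD_cons_zero, List.getD_cons_succ] at hi hj'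
    all_goals first | omega | skip
    · by_contra hlt
      rw [hz j (by omega)] at hj'
      exact Bool.false_ne_true hj'
    · have := h i j (by omega) (by simpa using hj) hi hj'
      omega

theorem replicate_false_append_iff {m : ℕ} {w : List Bool} :
    Separated k (List.replicate m false ++ w) ↔ Separated k w := by
  induction m with
  | zero => rfl
  | succ m ih => rw [List.replicate_succ, List.cons_append, cons_false_iff, ih]

end Separated

def separatedWords (k n : ℕ) : Set (List Bool) := {v | v.length = n ∧ Separated k v}

theorem separatedWords_finite (k n : ℕ) : (separatedWords k n).Finite :=
  (List.finite_length_eq Bool n).subset fun _ hv => hv.1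

theorem separatedWords_zero (k : ℕ) : separatedWords k 0 = {[]} := by
  ext v
  simp only [separatedWords, Set.mem_ofPred_eq, Set.mem_singleton_iff, List.length_eq_zero_iff,
    and_iff_left_iff_imp]
  rintro rfl
  exact Separated.nil

theorem separatedWords_succ (k n : ℕ) :
    separatedWords k (n + 1) = List.cons false '' separatedWords k n ∪
      (fun u => true :: (List.replicate (min k n) false ++ u)) '' separatedWords k (n - k) := by
  ext v
  rcases v with _ | ⟨_ | _, w⟩
  · simp [separatedWords]
  · simp [separatedWords, Separated.cons_false_iff]
  · simp only [separatedWords, Set.mem_union, Set.mem_image, Set.mem_ofPred_eq,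
      List.length_cons, Nat.add_right_cancel_iff, Separated.cons_true_iff,
      List.forall_getD_eq_false_iff, List.cons.injEq, Bool.false_eq_true, false_and,
      and_false, exists_false, true_and, false_or]
    constructor
    · rintro ⟨rfl, ⟨u, hu⟩, hsep⟩
      have hlen := congrArg List.length hu
      rw [hu, Separated.replicate_false_append_iff] at hsep
      simp only [List.length_append, List.length_replicate] at hlen
      exact ⟨u, ⟨by omega, hsep⟩, hu.symm⟩
    · rintro ⟨u, ⟨hlen, hsep⟩, rfl⟩
      have hwlen : (List.replicate (min k n) false ++ u).length = n := by simp; omega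
      exact ⟨hwlen, ⟨u, by rw [hwlen]⟩, Separated.replicate_false_append_iff.2 hsep⟩

theorem Q_eq_ncard (k n : ℕ) : Q k n = (separatedWords k n).ncard := rfl

theorem Q_zero (k : ℕ) : Q k 0 = 1 := by
  rw [Q_eq_ncard, separatedWords_zero, Set.ncard_singleton]

theorem Q_succ (k n : ℕ) : Q k (n + 1) = Q k n + Q k (n - k) := by
  have hdisj : Disjoint (List.cons false '' separatedWords k n)
      ((fun u => true :: (List.replicate (min k n) false ++ u)) '' separatedWords k (n - k)) := by
    rw [Set.disjoint_left]
    rintro _ ⟨_, _, rfl⟩ ⟨_, _, h⟩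
    exact Bool.noConfusion (List.head_eq_of_cons_eq h)
  rw [Q_eq_ncard, separatedWords_succ, Set.ncard_union_eq hdisj
      ((separatedWords_finite k n).image _) ((separatedWords_finite k (n - k)).image _),
    Set.ncard_image_of_injective _ List.cons_injective,
    Set.ncard_image_of_injective (f := fun u => true :: (List.replicate (min k n) false ++ u)) _
      (List.cons_injective.comp (List.append_right_injective _))]
  rfl

theorem Q_of_le {k n : ℕ} (hn : n ≤ k + 1) : Q k n = n + 1 := by
  induction n with
  | zero => exact Q_zero k
  | succ n ih => rw [Q_succ, ih (by omega), Nat.sub_eq_zero_of_le (by omega), Q_zero]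

theorem Q_add_succ (k n : ℕ) : Q k (n + k + 1) = Q k (n + k) + Q k n := by
  rw [Q_succ, Nat.add_sub_cancel]

theorem pow_add_succ_of_root {R : Type*} [Semiring R] {β : R} {k : ℕ}
    (hroot : β ^ (k + 1) = β ^ k + 1) (n : ℕ) : β ^ (n + k + 1) = β ^ (n + k) + β ^ n := by
  rw [add_assoc, pow_add, hroot, mul_add, mul_one, ← pow_add]

theorem lt_of_initial_lt_of_recurrence {α : Type*} [Add α] [Preorder α] [AddLeftStrictMono α]
    [AddRightStrictMono α] {k : ℕ} {a b : ℕ → α}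
    (ha : ∀ n, a (n + k + 1) = a (n + k) + a n) (hb : ∀ n, b (n + k + 1) = b (n + k) + b n)
    (hinit : ∀ n ≤ k, a n < b n) (n : ℕ) : a n < b n := by
  induction n using Nat.strong_induction_on with
  | _ n ih =>
    rcases le_or_gt n k with hn | hn
    · exact hinit n hn
    · obtain ⟨m, rfl⟩ : ∃ m, n = m + k + 1 := ⟨n - k - 1, by omega⟩
      rw [ha, hb]
      exact add_lt_add (ih _ (by omega)) (ih _ (by omega))

theorem Q_growth_general (k : ℕ) (β : ℝ) (hβ : 1 < β)
    (hroot : β ^ (k + 1) = β ^ k + 1) :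
    ∃ c > (0 : ℝ), ∃ d > (0 : ℝ),
      ∀ n : ℕ, c * β ^ n < (Q k n : ℝ) ∧ (Q k n : ℝ) < d * β ^ n := by
  have hQ (n : ℕ) : (Q k (n + k + 1) : ℝ) = Q k (n + k) + Q k n := by
    exact_mod_cast Q_add_succ k n
  have hpow (c : ℝ) (n : ℕ) : c * β ^ (n + k + 1) = c * β ^ (n + k) + c * β ^ n := by
    rw [pow_add_succ_of_root hroot, mul_add]
  have hQ_init {n : ℕ} (hn : n ≤ k) : (Q k n : ℝ) = n + 1 := by
    exact_mod_cast Q_of_le (Nat.le_succ_of_le hn)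
  refine ⟨(β ^ (k + 1))⁻¹, by positivity, k + 2, by positivity, fun n => ⟨?_, ?_⟩⟩
  · refine lt_of_initial_lt_of_recurrence (a := fun n => (β ^ (k + 1))⁻¹ * β ^ n)
      (b := fun n => (Q k n : ℝ)) (hpow _) hQ (fun n hn => ?_) n
    rw [hQ_init hn, inv_mul_lt_iff₀ (by positivity)]
    calc β ^ n < β ^ (k + 1) := pow_lt_pow_right₀ hβ (by omega)
      _ ≤ β ^ (k + 1) * (n + 1) :=
        le_mul_of_one_le_right (by positivity) (le_add_of_nonneg_left n.cast_nonneg)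
  · refine lt_of_initial_lt_of_recurrence (a := fun n => (Q k n : ℝ))
      (b := fun n => (k + 2) * β ^ n) hQ (hpow _) (fun n hn => ?_) n
    rw [hQ_init hn]
    calc (n : ℝ) + 1 < k + 2 := by exact_mod_cast (show n + 1 < k + 2 by omega)
      _ ≤ (k + 2) * β ^ n := le_mul_of_one_le_right (by positivity) (one_le_pow₀ hβ.le)

/-- If `β` is the largest real root of `x^(k+1) - x^k - 1`, then there are positive
constants `c, d` with `c·β^n < q_k(n) < d·β^n` for all `n`. -/
theorem Q_growth (k : ℕ) (hk : 1 ≤ k) (β : ℝ) (hβ : 1 < β)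
    (hroot : β ^ (k + 1) = β ^ k + 1)
    (hmax : ∀ x : ℝ, x ^ (k + 1) = x ^ k + 1 → x ≤ β) :
    ∃ c > (0 : ℝ), ∃ d > (0 : ℝ),
      ∀ n : ℕ, c * β ^ n < (Q k n : ℝ) ∧ (Q k n : ℝ) < d * β ^ n :=
  Q_growth_general k β hβ hroot
end

section
/- For each positive integer k define γ_k = max over k+1 ≤ n ≤ 2(k+1) of (log q_k(n))/n, where q_k(n) counts binary words of length n with any two 1's separated by at least k zeros. Then γ_k = max over all n ≥ k+1 of (log q_k(n))/n; that is, q_k(n) ≤ exp(γ_k · n) for every n ≥ k+1. -/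
namespace Separated

variable {k : ℕ} {v : List Bool}

theorem take (h : Separated k v) (m : ℕ) : Separated k (v.take m) := by
  intro i j hij hj hi1 hj1
  rw [List.length_take] at hj
  have hjm : j < m := lt_of_lt_of_le hj (min_le_left _ _)
  apply h i j hij (lt_of_lt_of_le hj (min_le_right _ _))
  · rwa [List.getD_eq_getElem?_getD, ← List.getElem?_take_of_lt (hij.trans hjm),
      ← List.getD_eq_getElem?_getD]
  · rwa [List.getD_eq_getElem?_getD, ← List.getElem?_take_of_lt hjm,
      ← List.getD_eq_getElem?_getD]

theorem drop (h : Separated k v) (m : ℕ) : Separated k (v.drop m) := by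
  intro i j hij hj hi1 hj1
  rw [List.length_drop] at hj
  have : m + i + k < m + j := by
    apply h (m + i) (m + j) (by omega) (by omega)
    · rwa [List.getD_eq_getElem?_getD, ← List.getElem?_drop, ← List.getD_eq_getElem?_getD]
    · rwa [List.getD_eq_getElem?_getD, ← List.getElem?_drop, ← List.getD_eq_getElem?_getD]
  omega

theorem replicate_false (k n : ℕ) : Separated k (List.replicate n false) := by
  intro i j _ _ hi1 _
  rw [List.getD_eq_getElem?_getD, List.getElem?_replicate] at hi1
  split_ifs at hi1 <;> simp_all

end Separated

theorem finite_setOf_separated (k n : ℕ) :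
    {v : List Bool | v.length = n ∧ Separated k v}.Finite :=
  (List.finite_length_eq Bool n).subset fun _ h => h.1

theorem Q_pos (k n : ℕ) : 0 < Q k n :=
  (Set.ncard_pos (finite_setOf_separated k n)).2
    ⟨List.replicate n false, List.length_replicate, Separated.replicate_false k n⟩

theorem Q_add_le_mul (k m n : ℕ) : Q k (m + n) ≤ Q k m * Q k n := by
  rw [Q, Q, Q, ← Set.ncard_prod]
  refine Set.ncard_le_ncard_of_injOn (fun v => (v.take m, v.drop m)) ?_ ?_
    ((finite_setOf_separated k m).prod (finite_setOf_separated k n))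
  · rintro v ⟨hlen, hsep⟩
    exact ⟨⟨by simp [hlen], hsep.take m⟩, ⟨by simp [hlen], hsep.drop m⟩⟩
  · intro v _ w _ hvw
    simp only [Prod.mk.injEq] at hvw
    rw [← List.take_append_drop m v, ← List.take_append_drop m w, hvw.1, hvw.2]

theorem le_exp_mul_of_submultiplicative {f : ℕ → ℝ} (hf₀ : ∀ n, 0 ≤ f n)
    (hf : ∀ m n, f (m + n) ≤ f m * f n) {p : ℕ} (hp : 0 < p) {γ : ℝ}
    (hwindow : ∀ n, p ≤ n → n ≤ 2 * p → f n ≤ Real.exp (γ * n)) :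
    ∀ n, p ≤ n → f n ≤ Real.exp (γ * n) := by
  intro n
  induction n using Nat.strong_induction_on with
  | _ n ih =>
    intro hpn
    rcases le_or_gt n (2 * p) with hn | hn
    · exact hwindow n hpn hn
    obtain ⟨r, rfl⟩ : ∃ r, n = p + r := ⟨n - p, by omega⟩
    calc f (p + r) ≤ f p * f r := hf p r
      _ ≤ Real.exp (γ * p) * Real.exp (γ * r) :=
          mul_le_mul (hwindow p le_rfl (by omega)) (ih r (by omega) (by omega)) (hf₀ r)
            (Real.exp_pos _).le
      _ = Real.exp (γ * ↑(p + r)) := by rw [← Real.exp_add]; push_cast; ring_nf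

theorem log_div_le_iff_le_exp_mul {x n γ : ℝ} (hx : 0 < x) (hn : 0 < n) :
    Real.log x / n ≤ γ ↔ x ≤ Real.exp (γ * n) := by
  rw [div_le_iff₀ hn, Real.log_le_iff_le_exp hx]

theorem gamma_max_general (k : ℕ) (γ : ℝ)
    (hγ : γ = sSup {x : ℝ | ∃ n : ℕ, k + 1 ≤ n ∧ n ≤ 2 * (k + 1) ∧
      x = Real.log (Q k n) / n}) :
    (∀ n : ℕ, k + 1 ≤ n → (Q k n : ℝ) ≤ Real.exp (γ * n)) ∧
    γ = sSup {x : ℝ | ∃ n : ℕ, k + 1 ≤ n ∧ x = Real.log (Q k n) / n} := by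
  set W := {x : ℝ | ∃ n : ℕ, k + 1 ≤ n ∧ n ≤ 2 * (k + 1) ∧ x = Real.log (Q k n) / n}
  have hW_fin : W.Finite := by
    refine ((Set.finite_Icc (k + 1) (2 * (k + 1))).image
      (fun n : ℕ => Real.log (Q k n) / n)).subset ?_
    rintro x ⟨n, h1, h2, rfl⟩
    exact ⟨n, ⟨h1, h2⟩, rfl⟩
  have hγ_mem : γ ∈ W := hγ ▸ Set.Nonempty.csSup_mem ⟨_, k + 1, le_rfl, by omega, rfl⟩ hW_fin
  have hQ_pos (n : ℕ) : (0 : ℝ) < Q k n := by exact_mod_cast Q_pos k n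
  have hn_pos {n : ℕ} (hn : k + 1 ≤ n) : (0 : ℝ) < n := by exact_mod_cast (by omega : 0 < n)
  have hbound : ∀ n, k + 1 ≤ n → (Q k n : ℝ) ≤ Real.exp (γ * n) := by
    refine le_exp_mul_of_submultiplicative (fun n => (hQ_pos n).le)
      (fun m n => by exact_mod_cast Q_add_le_mul k m n) k.succ_pos fun n h1 h2 => ?_
    rw [← log_div_le_iff_le_exp_mul (hQ_pos n) (hn_pos h1)]
    exact hγ ▸ le_csSup hW_fin.bddAbove ⟨n, h1, h2, rfl⟩
  refine ⟨hbound, (IsGreatest.csSup_eq ⟨?_, ?_⟩).symm⟩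
  · obtain ⟨n, h1, -, h3⟩ := hγ_mem
    exact ⟨n, h1, h3⟩
  · rintro x ⟨n, hn, rfl⟩
    exact (log_div_le_iff_le_exp_mul (hQ_pos n) (hn_pos hn)).2 (hbound n hn)

/-- The maximum of `(log q_k(n))/n` over `k+1 ≤ n ≤ 2(k+1)` equals the supremum over all
`n ≥ k+1`; in particular `q_k(n) ≤ exp(γ_k · n)` for every `n ≥ k+1`. -/
theorem gamma_max (k : ℕ) (hk : 1 ≤ k) (γ : ℝ)
    (hγ : γ = sSup {x : ℝ | ∃ n : ℕ, k + 1 ≤ n ∧ n ≤ 2 * (k + 1) ∧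
      x = Real.log (Q k n) / n}) :
    (∀ n : ℕ, k + 1 ≤ n → (Q k n : ℝ) ≤ Real.exp (γ * n)) ∧
    γ = sSup {x : ℝ | ∃ n : ℕ, k + 1 ≤ n ∧ x = Real.log (Q k n) / n} :=
  gamma_max_general k γ hγ
end

section
/- Let w be an infinite word over {0,1} that is not ultimately periodic and whose complexity satisfies p_w(2) ≤ 3. Then 00 and 11 cannot both be factors of w; consequently either w contains no factor 11 (so some shift of w is a concatenation of blocks from {0, 10}) or w contains no factor 00. -/
/-- `v` is a factor of the infinite word `w`. -/
def IsFactor {A : Type*} (w : ℕ → A) (v : List A) : Prop :=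
  ∃ i, v = (List.range v.length).map (fun j => w (i + j))

/-- The complexity function of the infinite word `w`. -/
noncomputable def Complexity {A : Type*} (w : ℕ → A) (n : ℕ) : ℕ :=
  Set.ncard {v : List A | v.length = n ∧ IsFactor w v}

/-- `w` is ultimately periodic. -/
def UltimatelyPeriodic {A : Type*} (w : ℕ → A) : Prop :=
  ∃ N p : ℕ, 1 ≤ p ∧ ∀ n, N ≤ n → w (n + p) = w n

/-!
If `11` and `00` both occur in a word that is not ultimately periodic, then the word cannot
stay in a run of `1`s (or of `0`s) forever, so it also leaves such a run: `10` and `01` occur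
as well. All four binary words of length two are then factors, so `p_w(2) = 4`.
-/

section Word

variable {A : Type*} {w : ℕ → A}

theorem isFactor_pair {i : ℕ} {a b : A} (ha : w i = a) (hb : w (i + 1) = b) :
    IsFactor w [a, b] :=
  ⟨i, by simp [List.range_succ, ha, hb]⟩

theorem card_le_complexity [Finite A] {n : ℕ} {s : Finset (List A)}
    (hs : ∀ v ∈ s, v.length = n ∧ IsFactor w v) : s.card ≤ Complexity w n := by
  rw [← Set.ncard_coe_finset]
  exact Set.ncard_le_ncard hs ((List.finite_length_eq A n).subset fun _ hv => hv.1)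

theorem UltimatelyPeriodic.of_eventually_const {N : ℕ} {a : A} (h : ∀ n, N ≤ n → w n = a) :
    UltimatelyPeriodic w :=
  ⟨N, 1, le_rfl, fun n hn => by rw [h n hn, h (n + 1) (by omega)]⟩

theorem forall_ge_eq_of_succ_eq {i : ℕ} {a : A} (hi : w i = a)
    (hsucc : ∀ n, w n = a → w (n + 1) = a) : ∀ n, i ≤ n → w n = a := by
  intro n hn
  induction n, hn using Nat.le_induction with
  | base => exact hi
  | succ n _ ih => exact hsucc n ih

theorem exists_succ_ne_of_not_ultimatelyPeriodic (hw : ¬ UltimatelyPeriodic w) {i : ℕ} {a : A}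
    (hi : w i = a) : ∃ j, w j = a ∧ w (j + 1) ≠ a := by
  by_contra! h
  exact hw (.of_eventually_const (forall_ge_eq_of_succ_eq hi h))

end Word

/-- If `w` is a non ultimately periodic binary word with `p_w(2) ≤ 3`, then `00` and `11`
cannot both be factors of `w`: either `w` contains no factor `11` or no factor `00`. -/
theorem not_both_squares (w : ℕ → Bool) (hnp : ¬ UltimatelyPeriodic w)
    (hcomp : Complexity w 2 ≤ 3) :
    (∀ i, ¬ (w i = true ∧ w (i + 1) = true)) ∨
    (∀ i, ¬ (w i = false ∧ w (i + 1) = false)) := by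
  by_contra! ⟨⟨i₁₁, h₁, h₁'⟩, ⟨i₀₀, h₀, h₀'⟩⟩
  obtain ⟨i₁₀, h₁₀, h₁₀'⟩ := exists_succ_ne_of_not_ultimatelyPeriodic hnp h₁
  obtain ⟨i₀₁, h₀₁, h₀₁'⟩ := exists_succ_ne_of_not_ultimatelyPeriodic hnp h₀
  have hall : ∀ v ∈ ({[true, true], [false, false], [true, false], [false, true]} :
      Finset (List Bool)), v.length = 2 ∧ IsFactor w v := by
    simp only [Finset.mem_insert, Finset.mem_singleton]
    rintro v (rfl | rfl | rfl | rfl)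
    · exact ⟨rfl, isFactor_pair h₁ h₁'⟩
    · exact ⟨rfl, isFactor_pair h₀ h₀'⟩
    · exact ⟨rfl, isFactor_pair h₁₀ (by simpa using h₁₀')⟩
    · exact ⟨rfl, isFactor_pair h₀₁ (by simpa using h₀₁')⟩
  have hcard : 4 ≤ Complexity w 2 := card_le_complexity hall
  omega
end

section
/- Let a, b be finite binary words with distinct first letters, |a| ≥ |b| ≥ 1, s a positive integer, and let w be a non ultimately periodic infinite binary word that is a concatenation of blocks from {a, b·a^s}. If p_w(k) = k+1 for k = (s+1)|a| + |b|, and w = γ_1 γ_2 ⋯ with each γ_i ∈ {A, B} (A = a, B = b·a^s), then there do not exist indices 1 < i < j with γ_i = γ_{i+1} = B and γ_j = γ_{j+1} = A. -/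
/-- The infinite word `w` is the infinite concatenation of the finite words
`blocks 0, blocks 1, blocks 2, …`. -/
def IsConcat {A : Type*} (w : ℕ → A) (blocks : ℕ → List A) : Prop :=
  (∀ n, blocks n ≠ []) ∧
  ∀ n j (h : j < (blocks n).length),
    w ((Finset.range n).sum (fun i => (blocks i).length) + j) = (blocks n).get ⟨j, h⟩

/-!
Write `B = b aˢ` and `W = a B`. Every block ends with `a`, so at the first `BB` the word `W` is
followed by the first letter of `b`; at the last `B` before the `AA` it is followed by the first
letter of `a`, and in the ensuing run `B aᵗ B` (`t ≥ 2`) the words `W aᵗ⁻¹` and `W aᵗ` are followed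
by the first letters of `a` and `b`. Let `m` be least such that the suffixes of length `m` of `W`
and `W a` differ: counting the first letter of `a` gives `m < |W|`, and minimality makes the
suffix of length `m` of `W aʳ` the same for all `r ≥ 1`. So the two suffixes are distinct right
special factors of length `m` and `p(m + 1) ≥ p(m) + 2`. A word that is not ultimately periodic
has a right special factor of every length, hence `p(|W|) ≥ |W| + 2`, whereas `|W| = k`.
-/

open List

section Factors

variable {α : Type*} {w : ℕ → α}

def factorAt (w : ℕ → α) (i n : ℕ) : List α := (range n).map fun j => w (i + j)

@[simp]
lemma length_factorAt (i n : ℕ) : (factorAt w i n).length = n := by simp [factorAt]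

@[simp]
lemma getElem_factorAt (i n k : ℕ) (h : k < (factorAt w i n).length) :
    (factorAt w i n)[k] = w (i + k) := by simp [factorAt]

lemma factorAt_add (i n k : ℕ) : factorAt w i (n + k) = factorAt w i n ++ factorAt w (i + n) k := by
  simp [factorAt, range_add, add_assoc]

lemma factorAt_one (i : ℕ) : factorAt w i 1 = [w i] := by simp [factorAt]

lemma isFactor_factorAt (i n : ℕ) : IsFactor w (factorAt w i n) := ⟨i, by rw [length_factorAt]; rfl⟩

lemma IsFactor.of_infix {u v : List α} (h : u <:+: v) (hv : IsFactor w v) : IsFactor w u := by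
  obtain ⟨s, t, rfl⟩ := h
  obtain ⟨i, hi⟩ := hv
  refine ⟨i + s.length, ?_⟩
  change _ = factorAt w i _ at hi
  rw [length_append, length_append, factorAt_add, factorAt_add] at hi
  obtain ⟨hsu, -⟩ := append_inj' hi (by simp)
  exact (append_inj' hsu (by simp)).2

lemma IsFactor.exists_append_singleton {u : List α} (h : IsFactor w u) :
    ∃ c, IsFactor w (u ++ [c]) := by
  obtain ⟨i, hi⟩ := h
  change u = factorAt w i _ at hi
  refine ⟨w (i + u.length), isFactor_factorAt (w := w) i (u.length + 1) |>.of_infix ?_⟩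
  rw [factorAt_add, factorAt_one, ← hi]

lemma finite_setOf_isFactor [Finite α] (w : ℕ → α) (n : ℕ) :
    {v : List α | v.length = n ∧ IsFactor w v}.Finite :=
  (finite_length_eq α n).subset fun _ hv => hv.1

lemma complexity_pos [Finite α] (w : ℕ → α) (n : ℕ) : 0 < Complexity w n :=
  (Set.ncard_pos (finite_setOf_isFactor w n)).2
    ⟨factorAt w 0 n, length_factorAt 0 n, isFactor_factorAt 0 n⟩

end Factors

lemma ultimatelyPeriodic_of_factorAt_eq {α : Type*} [Finite α] {w : ℕ → α} {m : ℕ}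
    (hnext : ∀ i i', factorAt w i m = factorAt w i' m → w (i + m) = w (i' + m)) :
    UltimatelyPeriodic w := by
  have : Finite {l : List α // l.length = m} := (finite_length_eq α m).to_subtype
  obtain ⟨i₁, i₂, hne, heq⟩ :=
    Finite.exists_ne_map_eq_of_infinite fun i => (⟨factorAt w i m, length_factorAt i m⟩ :
      {l : List α // l.length = m})
  wlog hlt : i₁ < i₂ generalizing i₁ i₂
  · exact this i₂ i₁ hne.symm heq.symm (by omega)
  obtain ⟨p, rfl⟩ := Nat.exists_eq_add_of_lt hlt
  have hshift : ∀ d, factorAt w (i₁ + d) m = factorAt w (i₁ + p + 1 + d) m := by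
    intro d
    induction d with
    | zero => simpa using congrArg Subtype.val heq
    | succ d ih =>
      have hlast := hnext _ _ ih
      have hwide : factorAt w (i₁ + d) (1 + m) = factorAt w (i₁ + p + 1 + d) (1 + m) := by
        rw [add_comm 1 m, factorAt_add, factorAt_add, ih, factorAt_one, factorAt_one, hlast]
      rw [factorAt_add, factorAt_add, factorAt_one, factorAt_one] at hwide
      simpa [add_assoc] using (append_inj' hwide (by simp)).2
  refine ⟨i₁ + m, p + 1, by omega, fun x hx => ?_⟩
  have := hnext _ _ (hshift (x - i₁ - m))
  rw [show i₁ + (x - i₁ - m) + m = x by omega,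
    show i₁ + p + 1 + (x - i₁ - m) + m = x + (p + 1) by omega] at this
  exact this.symm

def RightSpecial (w : ℕ → Bool) (v : List Bool) : Prop := ∀ c, IsFactor w (v ++ [c])

section Complexity

variable {w : ℕ → Bool}

lemma rightSpecial_of_ne {v : List Bool} {c c' : Bool} (hc : c ≠ c')
    (h : IsFactor w (v ++ [c])) (h' : IsFactor w (v ++ [c'])) : RightSpecial w v := by
  intro d
  obtain rfl | rfl : d = c ∨ d = c' := by cases d <;> cases c <;> cases c' <;> simp_all
  exacts [h, h']

lemma exists_rightSpecial_of_not_ultimatelyPeriodic (hnp : ¬ UltimatelyPeriodic w) (m : ℕ) :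
    ∃ v : List Bool, v.length = m ∧ RightSpecial w v := by
  by_contra! hno
  refine hnp (ultimatelyPeriodic_of_factorAt_eq (m := m) fun i i' heq => ?_)
  by_contra hne
  refine hno _ (length_factorAt (w := w) i m) (rightSpecial_of_ne hne ?_ ?_)
  · rw [← factorAt_one, ← factorAt_add]; exact isFactor_factorAt _ _
  · rw [heq, ← factorAt_one, ← factorAt_add]; exact isFactor_factorAt _ _

/-- Each factor of length `m` has an extension `u ++ [next u]`; a right special `v` has in
addition `v ++ [!next v]`. -/
lemma complexity_add_card_le {m : ℕ} (S : Finset (List Bool))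
    (hS : ∀ v ∈ S, v.length = m ∧ RightSpecial w v) :
    Complexity w m + S.card ≤ Complexity w (m + 1) := by
  have hext : ∀ u, ∃ c, IsFactor w u → IsFactor w (u ++ [c]) := fun u => by
    by_cases hu : IsFactor w u
    · obtain ⟨c, hc⟩ := hu.exists_append_singleton
      exact ⟨c, fun _ => hc⟩
    · exact ⟨true, fun h => absurd h hu⟩
  choose next hnext using hext
  set F := {v : List Bool | v.length = m ∧ IsFactor w v}
  have hφ : Function.Injective fun u => u ++ [next u] :=
    fun u v h => (append_inj' h rfl).1
  have hψ : Function.Injective fun u => u ++ [!next u] :=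
    fun u v h => (append_inj' h rfl).1
  have hdisj : Disjoint ((fun u => u ++ [next u]) '' F) ((fun u => u ++ [!next u]) '' ↑S) := by
    rw [Set.disjoint_left]
    rintro _ ⟨u, -, rfl⟩ ⟨v, -, hvu⟩
    obtain ⟨rfl, hc⟩ := append_inj' hvu rfl
    simp at hc
  have hsub : (fun u => u ++ [next u]) '' F ∪ (fun u => u ++ [!next u]) '' ↑S ⊆
      {v : List Bool | v.length = m + 1 ∧ IsFactor w v} := by
    rintro _ (⟨u, hu, rfl⟩ | ⟨v, hv, rfl⟩)
    · exact ⟨by simp [hu.1], hnext u hu.2⟩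
    · exact ⟨by simp [(hS v hv).1], (hS v hv).2 _⟩
  calc Complexity w m + S.card
      = ((fun u => u ++ [next u]) '' F ∪ (fun u => u ++ [!next u]) '' ↑S).ncard := by
        rw [Set.ncard_union_eq hdisj ((finite_setOf_isFactor w m).image _) (S.finite_toSet.image _),
          Set.ncard_image_of_injective _ hφ, Set.ncard_image_of_injective _ hψ,
          Set.ncard_coe_finset]
        rfl
    _ ≤ Complexity w (m + 1) := Set.ncard_le_ncard hsub (finite_setOf_isFactor w (m + 1))

lemma complexity_add_le (hnp : ¬ UltimatelyPeriodic w) (m d : ℕ) :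
    Complexity w m + d ≤ Complexity w (m + d) := by
  induction d with
  | zero => rfl
  | succ d ih =>
    obtain ⟨v, hv, hrs⟩ := exists_rightSpecial_of_not_ultimatelyPeriodic hnp (m + d)
    have := complexity_add_card_le {v} (by simpa using ⟨hv, hrs⟩)
    rw [Finset.card_singleton] at this
    rw [← add_assoc m]
    omega

lemma add_two_le_complexity_of_rightSpecial (hnp : ¬ UltimatelyPeriodic w) {u v : List Bool} {K : ℕ}
    (huv : u ≠ v) (hlen : u.length = v.length) (hK : u.length < K)
    (hu : RightSpecial w u) (hv : RightSpecial w v) :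
    K + 2 ≤ Complexity w K := by
  have h₀ := complexity_pos w 0
  have h₁ := complexity_add_le hnp 0 u.length
  have h₂ := complexity_add_card_le (w := w) (m := u.length) {u, v} (by simp [hlen, hu, hv])
  have h₃ := complexity_add_le hnp (u.length + 1) (K - u.length - 1)
  rw [Finset.card_pair huv] at h₂
  rw [show u.length + 1 + (K - u.length - 1) = K by omega] at h₃
  rw [zero_add] at h₁
  omega

end Complexity

namespace List

variable {α : Type*}

lemma rtake_append_of_le_length {l₁ l₂ : List α} {k : ℕ} (hk : k ≤ l₂.length) :
    (l₁ ++ l₂).rtake k = l₂.rtake k := by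
  rw [rtake_eq_reverse_take_reverse, rtake_eq_reverse_take_reverse, reverse_append,
    take_append_of_le_length (by simpa using hk)]

lemma length_rtake {l : List α} {k : ℕ} (hk : k ≤ l.length) : (l.rtake k).length = k := by
  simp only [rtake, length_drop]; omega

lemma rtake_append_singleton_suffix (l : List α) (k : ℕ) (x : α) :
    l.rtake k ++ [x] <:+ l ++ [x] :=
  suffix_append_self_iff.2 (drop_suffix _ _)

lemma rtake_length_sub_one (l : List α) : l.rtake (l.length - 1) = l.tail := by
  rcases l with _ | ⟨x, l⟩
  · rfl
  · simp [rtake]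

lemma rtake_append_congr {l₁ l₂ u : List α} {ρ k : ℕ} (h : l₁.rtake ρ = l₂.rtake ρ)
    (hk : k ≤ ρ + u.length) : (l₁ ++ u).rtake k = (l₂ ++ u).rtake k := by
  rw [rtake_eq_reverse_take_reverse, rtake_eq_reverse_take_reverse] at h ⊢
  have h' : l₁.reverse.take (k - u.length) = l₂.reverse.take (k - u.length) := by
    have := congrArg (fun l => l.reverse.take (k - u.length)) h
    simpa [take_take, show min (k - u.length) ρ = k - u.length by omega] using this
  simp [take_append, h']

lemma exists_rtake_eq_rtake_succ_ne {l₁ l₂ : List α} {ℓ : ℕ} (h : l₁.rtake ℓ ≠ l₂.rtake ℓ) :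
    ∃ ρ < ℓ, l₁.rtake ρ = l₂.rtake ρ ∧ l₁.rtake (ρ + 1) ≠ l₂.rtake (ρ + 1) := by
  induction ℓ with
  | zero => simp [rtake_zero] at h
  | succ ℓ ih =>
    by_cases hℓ : l₁.rtake ℓ = l₂.rtake ℓ
    · exact ⟨ℓ, by omega, hℓ, h⟩
    · obtain ⟨ρ, hρ, hρ'⟩ := ih hℓ
      exact ⟨ρ, by omega, hρ'⟩

lemma rtake_append_flatten_replicate {l a : List α} {ρ r : ℕ} (ha : a ≠ [])
    (h : l.rtake ρ = (l ++ a).rtake ρ) (hr : 1 ≤ r) :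
    (l ++ (replicate r a).flatten).rtake (ρ + 1) = (l ++ a).rtake (ρ + 1) := by
  have hstable : ∀ r, (l ++ (replicate r a).flatten).rtake ρ = l.rtake ρ := by
    intro r
    induction r with
    | zero => simp
    | succ r ih =>
      rw [replicate_succ', flatten_append, flatten_singleton, ← append_assoc, h]
      exact rtake_append_congr ih (by omega)
  obtain ⟨r, rfl⟩ := Nat.exists_eq_add_of_le' hr
  rw [replicate_succ', flatten_append, flatten_singleton, ← append_assoc]
  exact rtake_append_congr (hstable r) (by simpa [Nat.one_le_iff_ne_zero] using ha)

lemma tail_append_ne_tail_append [DecidableEq α] {x y : List α} (hx : x ≠ []) (hy : y ≠ [])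
    (h : x.head hx ≠ y.head hy) : x.tail ++ y ≠ y.tail ++ x := by
  intro heq
  have := congrArg (count (x.head hx)) heq
  rw [count_append, count_append, count_tail, count_tail, head?_eq_some_head hx,
    head?_eq_some_head hy] at this
  have hpos : 0 < x.count (x.head hx) := count_pos_iff.2 (head_mem hx)
  simp [Ne.symm h] at this
  omega

lemma rtake_ne_rtake_append [DecidableEq α] {a B : List α} (ha : a ≠ []) (hB : B ≠ [])
    (h : a.head ha ≠ B.head hB) :
    (a ++ B).rtake ((a ++ B).length - 1) ≠ (a ++ B ++ a).rtake ((a ++ B).length - 1) := by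
  have hlen : (a ++ B).length = (B ++ a).length := by simp [add_comm]
  have hright : (a ++ B ++ a).rtake ((a ++ B).length - 1) = B.tail ++ a := by
    rw [append_assoc, rtake_append_of_le_length (by omega), hlen, rtake_length_sub_one,
      tail_append_of_ne_nil hB]
  rw [hright, rtake_length_sub_one, tail_append_of_ne_nil ha]
  exact tail_append_ne_tail_append ha hB h

end List

/-- The two right special factors are the shortest suffixes of `W` and of `W a` that differ. -/
lemma exists_two_rightSpecial {w : ℕ → Bool} {W a : List Bool} {c c' : Bool} {r r' ℓ : ℕ}
    (hcc' : c ≠ c') (ha : a ≠ []) (hr : 1 ≤ r) (hr' : 1 ≤ r')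
    (hWc : IsFactor w (W ++ [c])) (hWc' : IsFactor w (W ++ [c']))
    (hWrc' : IsFactor w (W ++ (replicate r a).flatten ++ [c']))
    (hWrc : IsFactor w (W ++ (replicate r' a).flatten ++ [c]))
    (hℓ : ℓ ≤ W.length) (hne : W.rtake ℓ ≠ (W ++ a).rtake ℓ) :
    ∃ u v : List Bool, u ≠ v ∧ u.length = v.length ∧ u.length ≤ ℓ ∧
      RightSpecial w u ∧ RightSpecial w v := by
  obtain ⟨ρ, hρ, heq, hne'⟩ := exists_rtake_eq_rtake_succ_ne hne
  refine ⟨W.rtake (ρ + 1), (W ++ a).rtake (ρ + 1), hne', ?_, ?_, ?_, ?_⟩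
  · rw [length_rtake (by omega), length_rtake (by simp; omega)]
  · rw [length_rtake (by omega)]; omega
  · exact rightSpecial_of_ne hcc' (hWc.of_infix (rtake_append_singleton_suffix _ _ _).isInfix)
      (hWc'.of_infix (rtake_append_singleton_suffix _ _ _).isInfix)
  · refine rightSpecial_of_ne hcc' ?_ ?_
    · rw [← rtake_append_flatten_replicate ha heq hr']
      exact hWrc.of_infix (rtake_append_singleton_suffix _ _ _).isInfix
    · rw [← rtake_append_flatten_replicate ha heq hr]
      exact hWrc'.of_infix (rtake_append_singleton_suffix _ _ _).isInfix

lemma exists_run_between {P : ℕ → Prop} (hinf : ∀ N, ∃ x, N ≤ x ∧ P x) {p j : ℕ} (hp : P p)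
    (hpj : p ≤ j) (hj : ¬ P j) (hj₁ : ¬ P (j + 1)) :
    ∃ n t, p ≤ n ∧ 2 ≤ t ∧ P n ∧ (∀ k < t, ¬ P (n + 1 + k)) ∧ P (n + 1 + t) := by
  classical
  have hn : P (Nat.findGreatest P j) := Nat.findGreatest_spec hpj hp
  have hnj : Nat.findGreatest P j < j :=
    (Nat.findGreatest_le j).lt_of_ne fun h => hj (h ▸ hn)
  have hex := hinf (j + 2)
  obtain ⟨hjn', hn'⟩ := Nat.find_spec hex
  refine ⟨Nat.findGreatest P j, Nat.find hex - Nat.findGreatest P j - 1,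
    Nat.le_findGreatest hpj hp, by omega, hn, fun k hk hk' => ?_, by
      rwa [show Nat.findGreatest P j + 1 + (Nat.find hex - Nat.findGreatest P j - 1) =
        Nat.find hex by omega]⟩
  rcases lt_trichotomy (Nat.findGreatest P j + 1 + k) (j + 1) with hlt | heq | hgt
  · exact Nat.findGreatest_is_greatest (n := j) (by omega) (by omega) hk'
  · exact hj₁ (heq ▸ hk')
  · exact Nat.find_min hex (by omega) ⟨by omega, hk'⟩

section Blocks

variable {α : Type*} {w : ℕ → α} {blocks : ℕ → List α}

def blockPrefix (blocks : ℕ → List α) (m : ℕ) : List α := ((range m).map blocks).flatten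

lemma blockPrefix_succ (m : ℕ) : blockPrefix blocks (m + 1) = blockPrefix blocks m ++ blocks m := by
  simp [blockPrefix, range_succ]

lemma blockPrefix_add_of_forall {a : List α} {m r : ℕ} (h : ∀ k < r, blocks (m + k) = a) :
    blockPrefix blocks (m + r) = blockPrefix blocks m ++ (replicate r a).flatten := by
  induction r with
  | zero => simp
  | succ r ih =>
    rw [← add_assoc, blockPrefix_succ, ih fun k hk => h k (by omega), h r (by omega),
      replicate_succ', flatten_append, flatten_singleton, append_assoc]

lemma IsConcat.factorAt_blockPrefix (hc : IsConcat w blocks) (m : ℕ) :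
    factorAt w 0 (blockPrefix blocks m).length = blockPrefix blocks m := by
  induction m with
  | zero => simp [blockPrefix, factorAt]
  | succ m ih =>
    have hlen : (blockPrefix blocks m).length = ∑ i ∈ Finset.range m, (blocks i).length := by
      simp [blockPrefix, length_flatten, Finset.sum, Multiset.range, Function.comp_def]
    have hblock : factorAt w (blockPrefix blocks m).length (blocks m).length = blocks m :=
      ext_getElem (by simp) fun k _ hk => by simpa [hlen] using hc.2 m k hk
    rw [blockPrefix_succ, length_append, factorAt_add, ih, zero_add, hblock]

lemma IsConcat.isFactor_append_of_suffix (hc : IsConcat w blocks) {V : List α} {m : ℕ} {x : α}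
    (hV : V <:+ blockPrefix blocks m) (hx : [x] <+: blocks m) : IsFactor w (V ++ [x]) := by
  refine (isFactor_factorAt 0 (blockPrefix blocks (m + 1)).length).of_infix ?_
  obtain ⟨s, hs⟩ := hV
  obtain ⟨t, ht⟩ := hx
  refine ⟨s, t, ?_⟩
  rw [hc.factorAt_blockPrefix, blockPrefix_succ, ← hs, ← ht]
  simp

lemma IsConcat.ultimatelyPeriodic_of_forall_ge (hc : IsConcat w blocks) {a : List α}
    (ha : a ≠ []) {N : ℕ} (h : ∀ x, N ≤ x → blocks x = a) : UltimatelyPeriodic w := by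
  set E := (blockPrefix blocks N).length
  have hpow : ∀ r, factorAt w E (r * a.length) = (replicate r a).flatten := by
    intro r
    have hpre := hc.factorAt_blockPrefix (N + r)
    rw [blockPrefix_add_of_forall fun k _ => h (N + k) (by omega), length_append,
      factorAt_add, hc.factorAt_blockPrefix, zero_add] at hpre
    simpa using (append_inj' hpre (by simp)).2
  have hshift : ∀ r, factorAt w (E + a.length) (r * a.length) = factorAt w E (r * a.length) := by
    intro r
    have h' := hpow (r + 1)
    have hone : factorAt w E a.length = a := by simpa using hpow 1
    rw [add_mul, one_mul, add_comm, factorAt_add, hone, replicate_succ, flatten_cons] at h'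
    simpa [hpow r] using (append_inj' h' (by simp)).2
  have hapos : 0 < a.length := length_pos_iff.2 ha
  refine ⟨E, a.length, hapos, fun x hx => ?_⟩
  have hq : x - E < (x - E + 1) * a.length := by nlinarith
  have := getElem_of_eq (hshift (x - E + 1)) (by simpa using hq)
  simp only [getElem_factorAt] at this
  rwa [show E + a.length + (x - E) = x + a.length by omega, show E + (x - E) = x by omega]
    at this

lemma IsConcat.isFactor_append_of_run (hc : IsConcat w blocks) {a B : List α} {x : α} {n r : ℕ}
    (hend : a <:+ blocks n) (hB : blocks (n + 1) = B) (hrun : ∀ k < r, blocks (n + 2 + k) = a)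
    (hx : [x] <+: blocks (n + 2 + r)) :
    IsFactor w (a ++ B ++ (replicate r a).flatten ++ [x]) := by
  refine hc.isFactor_append_of_suffix ?_ hx
  rw [blockPrefix_add_of_forall hrun, blockPrefix_succ, blockPrefix_succ, hB, append_assoc,
    append_assoc, append_assoc]
  exact (suffix_append_self_iff.2 hend).trans (suffix_append _ _)

end Blocks

lemma suffix_block_of_eq_or_eq {a b : List Bool} {s : ℕ} {blocks : ℕ → List Bool} (hs : 1 ≤ s)
    (hblocks : ∀ i, blocks i = a ∨ blocks i = b ++ (replicate s a).flatten) (x : ℕ) :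
    a <:+ blocks x := by
  obtain ⟨s, rfl⟩ := Nat.exists_eq_add_of_le' hs
  rcases hblocks x with h | h
  · exact h ▸ suffix_refl a
  · rw [h, replicate_succ', flatten_append, flatten_singleton, ← append_assoc]
    exact suffix_append _ _

theorem no_BB_before_AA_general (a b : List Bool) (ha : a ≠ []) (hb : b ≠ [])
    (hhead : a.head ha ≠ b.head hb)
    (s : ℕ) (hs : 1 ≤ s)
    (w : ℕ → Bool) (blocks : ℕ → List Bool)
    (hblocks : ∀ i, blocks i = a ∨ blocks i = b ++ (List.replicate s a).flatten)
    (hconcat : IsConcat w blocks)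
    (hnp : ¬ UltimatelyPeriodic w)
    (hcomp : Complexity w ((s + 1) * a.length + b.length)
      = (s + 1) * a.length + b.length + 1) :
    ¬ ∃ i j : ℕ, 1 ≤ i ∧ i < j ∧
      blocks i = b ++ (List.replicate s a).flatten ∧
      blocks (i + 1) = b ++ (List.replicate s a).flatten ∧
      blocks j = a ∧ blocks (j + 1) = a := by
  rintro ⟨i, j, hi, hij, hBi, hBi₁, hAj, hAj₁⟩
  set B := b ++ (replicate s a).flatten with hBdef
  have hB : B ≠ [] := by simp [hBdef, hb]
  have hBhead : B.head hB = b.head hb := head_append_of_ne_nil hb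
  have hend := suffix_block_of_eq_or_eq hs hblocks
  have hisA : ∀ x, blocks x ≠ B → blocks x = a := fun x => (hblocks x).resolve_right
  have hAB : a ≠ B := fun h => hhead (by simp only [h, hBhead])
  have hinf : ∀ N, ∃ x, N ≤ x ∧ blocks x = B := fun N => by
    by_contra! h
    exact hnp (hconcat.ultimatelyPeriodic_of_forall_ge ha fun x hx => hisA x (h x hx))
  obtain ⟨n, t, hin, ht, hBn, hrun, hBt⟩ := exists_run_between hinf hBi₁ (by omega)
    (fun h => hAB (hAj.symm.trans h)) (fun h => hAB (hAj₁.symm.trans h))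
  obtain ⟨i, rfl⟩ := Nat.exists_eq_add_of_le' hi
  obtain ⟨n, rfl⟩ : ∃ n₀, n = n₀ + 1 := ⟨n - 1, by omega⟩
  have hA : ∀ k < t, blocks (n + 2 + k) = a := fun k hk => hisA _ (hrun k hk)
  have hbB : [b.head hb] <+: B := ⟨b.tail ++ (replicate s a).flatten, by
    rw [hBdef, ← append_assoc, singleton_append, cons_head_tail]⟩
  have haa : [a.head ha] <+: a := ⟨a.tail, by simp⟩
  obtain ⟨u, v, huv, hlen, hℓ, hu, hv⟩ := exists_two_rightSpecial (W := a ++ B) (r := t - 1)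
    (r' := t) (Ne.symm hhead) ha (by omega) (by omega)
    (by simpa using hconcat.isFactor_append_of_run (r := 0) (hend i) hBi (by simp) (hBi₁ ▸ hbB))
    (by simpa using
      hconcat.isFactor_append_of_run (r := 0) (hend n) hBn (by simp) (hA 0 (by omega) ▸ haa))
    (hconcat.isFactor_append_of_run (hend n) hBn (fun k _ => hA k (by omega))
      (hA (t - 1) (by omega) ▸ haa))
    (hconcat.isFactor_append_of_run (hend n) hBn hA (hBt ▸ hbB)) (Nat.sub_le _ _)
    (rtake_ne_rtake_append ha hB (hBhead ▸ hhead))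
  have hK : (a ++ B).length = (s + 1) * a.length + b.length := by simp [hBdef]; ring
  have := add_two_le_complexity_of_rightSpecial hnp huv hlen (K := (a ++ B).length)
    (by have := length_pos_iff.2 hb; omega) hu hv
  rw [hK, hcomp] at this
  omega

/-- Lemma 3.1: with `A = a` and `B = b·a^s`, if `w ∈ {A, B}^ℕ` is not ultimately periodic,
`p_w(k) = k+1` with `k = (s+1)|a| + |b|`, then `BB` and `AA` cannot both occur (except in
the first positions) in the block representation `w = γ₁γ₂⋯`. -/
theorem no_BB_before_AA (a b : List Bool) (ha : a ≠ []) (hb : b ≠ [])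
    (hhead : a.head ha ≠ b.head hb) (hlen : b.length ≤ a.length)
    (s : ℕ) (hs : 1 ≤ s)
    (w : ℕ → Bool) (blocks : ℕ → List Bool)
    (hblocks : ∀ i, blocks i = a ∨ blocks i = b ++ (List.replicate s a).flatten)
    (hconcat : IsConcat w blocks)
    (hnp : ¬ UltimatelyPeriodic w)
    (hcomp : Complexity w ((s + 1) * a.length + b.length)
      = (s + 1) * a.length + b.length + 1) :
    ¬ ∃ i j : ℕ, 1 ≤ i ∧ i < j ∧
      blocks i = b ++ (List.replicate s a).flatten ∧
      blocks (i + 1) = b ++ (List.replicate s a).flatten ∧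
      blocks j = a ∧ blocks (j + 1) = a :=
  no_BB_before_AA_general a b ha hb hhead s hs w blocks hblocks hconcat hnp hcomp
end
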